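/- Let η ∈ [0,1) and δ > 1, and let (y, y') be as in the context with N_{δ,η}(y) < ∞. Then y' is Bochner integrable on (1,∞), the limit value y(∞) := y(1) + ∫_1^∞ y'(x) dx is well defined, and lim_{t→∞} ( ‖y(1+t) − y(∞)‖_V² + ∫_0^∞ ‖y'(x+t)‖_V² v_{δ,η}(x) dx ) = 0. (This expresses the strong convergence S(t) → S_∞ of the shift semigroup S(t)y(x) = y(x+t) to the projection S_∞ y ≡ y(∞) on the modified Filipović space.) -/

import Mathlib

/-! By AM-GM, `‖y'(x)‖ ≤ (‖y'(x)‖² x^δ + x^{-δ}) / 2`, and `x^{-δ}` is integrable on `(1,∞)` since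
`δ > 1`; so `y'` is integrable there and `y(t) → y(∞)`. For `t ≥ 1` the weight only grows under the
shift `x ↦ x + t`, so the weighted energy of the shifted derivative is bounded by the tail
`∫_t^∞ ‖y'‖² v_{δ,η}`, which tends to zero. -/

open MeasureTheory Set Filter Topology

/-- The weight function `v_{δ,η}` on `(0,∞)`: `v_{δ,η}(x) = x^{η}` for `x ∈ (0,1]` and
`v_{δ,η}(x) = x^{δ}` for `x ∈ (1,∞)`. -/
noncomputable def weightV (δ η x : ℝ) : ℝ :=
  if x ≤ 1 then x ^ η else x ^ δ

theorem le_sq_mul_add_inv_div_two {s : ℝ} (hs : 0 < s) (b : ℝ) : b ≤ (b ^ 2 * s + s⁻¹) / 2 := by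
  have hsq : 0 ≤ (b * s - 1) ^ 2 * s⁻¹ := by positivity
  have hs' : s * s⁻¹ = 1 := mul_inv_cancel₀ hs.ne'
  nlinarith

section

variable {E : Type*} [NormedAddCommGroup E]

theorem aestronglyMeasurable_restrict_Ioi_of_forall_integrableOn_Ioc {f : ℝ → E} {a : ℝ}
    (hf : ∀ b, IntegrableOn f (Ioc a b)) : AEStronglyMeasurable f (volume.restrict (Ioi a)) := by
  have hcover : ⋃ n : ℕ, Ioc a n = Ioi a :=
    iUnion_Ioc_eq_Ioi_self_iff.mpr fun x _ => exists_nat_ge x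
  rw [← hcover, aestronglyMeasurable_iUnion_iff]
  exact fun n => (hf n).aestronglyMeasurable

theorem integrableOn_Ioi_of_integrableOn_sq_norm_mul_rpow {f : ℝ → E} {a δ : ℝ}
    (ha : 0 < a) (hδ : 1 < δ) (hmeas : AEStronglyMeasurable f (volume.restrict (Ioi a)))
    (hf : IntegrableOn (fun x => ‖f x‖ ^ 2 * x ^ δ) (Ioi a)) : IntegrableOn f (Ioi a) := by
  have hdecay : IntegrableOn (fun x : ℝ => x ^ (-δ)) (Ioi a) :=
    integrableOn_Ioi_rpow_of_lt (by linarith) ha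
  refine ((hf.add hdecay).div_const 2).mono' hmeas ?_
  filter_upwards [ae_restrict_mem measurableSet_Ioi] with x hx
  have hx0 : 0 < x := ha.trans hx
  rw [Pi.add_apply, Real.rpow_neg hx0.le]
  exact le_sq_mul_add_inv_div_two (Real.rpow_pos_of_pos hx0 δ) _

theorem integrableOn_Ioi_comp_add_right_iff {g : ℝ → E} (a t : ℝ) :
    IntegrableOn (fun x => g (x + t)) (Ioi a) ↔ IntegrableOn g (Ioi (a + t)) := by
  have h := (measurePreserving_add_right volume t).integrableOn_comp_preimage
    (measurableEmbedding_addRight t) (f := g) (s := Ioi (a + t))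
  rwa [preimage_add_const_Ioi, add_sub_cancel_right] at h

variable [NormedSpace ℝ E]

theorem setIntegral_Ioi_comp_add_right (g : ℝ → E) (a t : ℝ) :
    ∫ x in Ioi a, g (x + t) = ∫ x in Ioi (a + t), g x := by
  have h := (measurePreserving_add_right volume t).setIntegral_preimage_emb
    (measurableEmbedding_addRight t) g (Ioi (a + t))
  rwa [preimage_add_const_Ioi, add_sub_cancel_right] at h

theorem tendsto_atTop_of_sub_eq_intervalIntegral {f g : ℝ → E} {a : ℝ}
    (hf : IntegrableOn f (Ioi a)) (hg : ∀ b, a ≤ b → g b - g a = ∫ x in a..b, f x) :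
    Tendsto g atTop (𝓝 (g a + ∫ x in Ioi a, f x)) := by
  refine (tendsto_const_nhds.add (intervalIntegral_tendsto_integral_Ioi a hf tendsto_id)).congr' ?_
  filter_upwards [eventually_ge_atTop a] with b hb
  rw [id, ← hg b hb, add_sub_cancel]

end

theorem weightV_nonneg (δ η : ℝ) {x : ℝ} (hx : 0 ≤ x) : 0 ≤ weightV δ η x := by
  unfold weightV
  split <;> positivity

theorem weightV_of_one_lt (δ η : ℝ) {x : ℝ} (hx : 1 < x) : weightV δ η x = x ^ δ :=
  if_neg hx.not_ge

theorem weightV_le_weightV_add {δ η : ℝ} (hη : 0 ≤ η) (hδ : 0 ≤ δ) {x t : ℝ} (hx : 0 < x)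
    (ht : 1 ≤ t) :
    weightV δ η x ≤ weightV δ η (x + t) := by
  have hxt : 1 < x + t := by linarith
  rw [weightV_of_one_lt δ η hxt]
  unfold weightV
  split_ifs with hx1
  · exact (Real.rpow_le_one hx.le hx1 hη).trans (Real.one_le_rpow hxt.le hδ)
  · exact Real.rpow_le_rpow hx.le (by linarith) hδ

theorem tendsto_setIntegral_sq_norm_comp_add_mul_weightV {E : Type*} [NormedAddCommGroup E]
    {f : ℝ → E} {δ η : ℝ} (hη : 0 ≤ η) (hδ : 0 ≤ δ)
    (hf : IntegrableOn (fun x => ‖f x‖ ^ 2 * weightV δ η x) (Ioi 0)) :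
    Tendsto (fun t => ∫ x in Ioi 0, ‖f (x + t)‖ ^ 2 * weightV δ η x) atTop (𝓝 0) := by
  have htail : Tendsto (fun t => ∫ x in Ioi t, ‖f x‖ ^ 2 * weightV δ η x) atTop (𝓝 0) :=
    tendsto_integral_Ioi_zero tendsto_id
  refine tendsto_of_tendsto_of_tendsto_of_le_of_le' tendsto_const_nhds htail ?_ ?_
  · filter_upwards with t
    exact setIntegral_nonneg measurableSet_Ioi
      fun x hx => mul_nonneg (by positivity) (weightV_nonneg δ η (le_of_lt hx))
  · filter_upwards [eventually_ge_atTop 1] with t ht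
    have hshift : IntegrableOn (fun x => ‖f (x + t)‖ ^ 2 * weightV δ η (x + t)) (Ioi 0) :=
      (integrableOn_Ioi_comp_add_right_iff (g := fun x => ‖f x‖ ^ 2 * weightV δ η x) 0 t).mpr
        (hf.mono_set (Ioi_subset_Ioi (by linarith)))
    calc ∫ x in Ioi 0, ‖f (x + t)‖ ^ 2 * weightV δ η x
        ≤ ∫ x in Ioi 0, ‖f (x + t)‖ ^ 2 * weightV δ η (x + t) := by
          refine integral_mono_of_nonneg ?_ hshift ?_ <;>
            filter_upwards [ae_restrict_mem measurableSet_Ioi] with x (hx : 0 < x)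
          · exact mul_nonneg (by positivity) (weightV_nonneg δ η hx.le)
          · exact mul_le_mul_of_nonneg_left (weightV_le_weightV_add hη hδ hx ht) (by positivity)
      _ = ∫ x in Ioi t, ‖f x‖ ^ 2 * weightV δ η x := by
          rw [setIntegral_Ioi_comp_add_right (fun x => ‖f x‖ ^ 2 * weightV δ η x), zero_add]

theorem shift_semigroup_convergence_to_projection_general
    {V : Type*} [NormedAddCommGroup V] [InnerProductSpace ℝ V]
    (δ η : ℝ) (hη : η ∈ Set.Ico (0 : ℝ) 1) (hδ : 1 < δ)
    (y y' : ℝ → V)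
    (hloc : ∀ a b : ℝ, 0 < a → IntegrableOn y' (Set.Ioc a b))
    (hftc : ∀ a b : ℝ, 0 < a → a ≤ b → y b - y a = ∫ x in a..b, y' x)
    (hfin : IntegrableOn (fun x => ‖y' x‖ ^ 2 * weightV δ η x) (Set.Ioi 0)) :
    IntegrableOn y' (Set.Ioi 1) ∧
      Tendsto (fun t : ℝ =>
          ‖y (1 + t) - (y 1 + ∫ x in Set.Ioi (1 : ℝ), y' x)‖ ^ 2
            + ∫ x in Set.Ioi (0 : ℝ), ‖y' (x + t)‖ ^ 2 * weightV δ η x)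
        atTop (nhds 0) := by
  have hweighted : IntegrableOn (fun x => ‖y' x‖ ^ 2 * x ^ δ) (Ioi 1) :=
    (hfin.mono_set (Ioi_subset_Ioi zero_le_one)).congr_fun
      (fun x hx => by simp only [weightV_of_one_lt δ η hx]) measurableSet_Ioi
  have hint : IntegrableOn y' (Ioi 1) :=
    integrableOn_Ioi_of_integrableOn_sq_norm_mul_rpow one_pos hδ
      (aestronglyMeasurable_restrict_Ioi_of_forall_integrableOn_Ioc (hloc 1 · one_pos)) hweighted
  refine ⟨hint, ?_⟩
  have hlim : Tendsto y atTop (𝓝 (y 1 + ∫ x in Ioi 1, y' x)) :=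
    tendsto_atTop_of_sub_eq_intervalIntegral hint (hftc 1 · one_pos)
  have hvalue : Tendsto (fun t => ‖y (1 + t) - (y 1 + ∫ x in Ioi 1, y' x)‖ ^ 2) atTop (𝓝 0) := by
    simpa using ((tendsto_sub_nhds_zero_iff.mpr
      (hlim.comp (tendsto_atTop_add_const_left _ 1 tendsto_id))).norm.pow 2)
  simpa using hvalue.add
    (tendsto_setIntegral_sq_norm_comp_add_mul_weightV hη.1 (by linarith) hfin)

/-- Let `η ∈ [0,1)`, `δ > 1`, and let `(y,y')` be a pair with `y'` locally
Bochner integrable, `y(b) − y(a) = ∫_a^b y'` and `N_{δ,η}(y) < ∞`.  Then `y'` is Bochner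
integrable on `(1,∞)`, the limit value `y(∞) := y(1) + ∫_1^∞ y'` is well defined, and
`lim_{t→∞} (‖y(1+t) − y(∞)‖² + ∫_0^∞ ‖y'(x+t)‖² v_{δ,η}(x) dx) = 0`. -/
theorem shift_semigroup_convergence_to_projection
    {V : Type*} [NormedAddCommGroup V] [InnerProductSpace ℝ V]
    [SecondCountableTopology V] [CompleteSpace V]
    (δ η : ℝ) (hη : η ∈ Set.Ico (0 : ℝ) 1) (hδ : 1 < δ)
    (y y' : ℝ → V)
    (hloc : ∀ a b : ℝ, 0 < a → IntegrableOn y' (Set.Ioc a b))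
    (hftc : ∀ a b : ℝ, 0 < a → a ≤ b → y b - y a = ∫ x in a..b, y' x)
    (hfin : IntegrableOn (fun x => ‖y' x‖ ^ 2 * weightV δ η x) (Set.Ioi 0)) :
    IntegrableOn y' (Set.Ioi 1) ∧
      Tendsto (fun t : ℝ =>
          ‖y (1 + t) - (y 1 + ∫ x in Set.Ioi (1 : ℝ), y' x)‖ ^ 2
            + ∫ x in Set.Ioi (0 : ℝ), ‖y' (x + t)‖ ^ 2 * weightV δ η x)
        atTop (nhds 0) :=
  shift_semigroup_convergence_to_projection_general δ η hη hδ y y' hloc hftc hfin
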